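/- Let k be a commutative ring and α ∈ k. In the quotient T = k⟨x,y⟩/(yx − α) of the free associative k-algebra on two generators x, y by the two-sided ideal generated by yx − α, the family of monomials x^i y^j (i, j ≥ 0) is a basis of T as a k-module. -/

import Mathlib

/-- The relation on the free associative algebra `k⟨x,y⟩` identifying `yx`
with `α`; the quotient `RingQuot` is `k⟨x,y⟩/(yx − α)`. -/
def toeplitzRel (k : Type) [CommRing k] (α : k) :
    FreeAlgebra k (Fin 2) → FreeAlgebra k (Fin 2) → Prop :=
  fun a b => a = FreeAlgebra.ι k 1 * FreeAlgebra.ι k 0 ∧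
    b = algebraMap k (FreeAlgebra k (Fin 2)) α

/-!
The relation `y x = α` lets every word be rewritten, moving each `y` to the right of each `x`, as
`y ^ j * x ^ m = α ^ min j m • x ^ (m - j) * y ^ (j - m)`; so the monomials `x ^ i * y ^ j` span.
For independence, let `x` and `y` act on `k[ℕ × ℕ]` as left multiplication acts on these
normal forms: `x • e (i, j) = e (i + 1, j)`, `y • e (0, j) = e (0, j + 1)` and
`y • e (i + 1, j) = α • e (i, j)`. This action respects `y x = α`, and `x ^ i * y ^ j` sends
`e (0, 0)` to `e (i, j)`.
-/

section Normalization

variable {k A : Type*} [CommSemiring k] [Semiring A] [Algebra k A] {α : k} {x y : A}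

theorem pow_mul_pow_of_mul_eq_algebraMap (h : y * x = algebraMap k A α) (j m : ℕ) :
    y ^ j * x ^ m = α ^ min j m • (x ^ (m - j) * y ^ (j - m)) := by
  induction j generalizing m with
  | zero => simp
  | succ j ih =>
    cases m with
    | zero => simp
    | succ m =>
      calc y ^ (j + 1) * x ^ (m + 1) = y ^ j * (y * x) * x ^ m := by
            rw [pow_succ, pow_succ', mul_assoc, mul_assoc, mul_assoc]
        _ = α • (y ^ j * x ^ m) := by
            rw [h, ← Algebra.commutes, mul_assoc, ← Algebra.smul_def]
        _ = _ := by
            rw [ih, smul_smul, ← pow_succ', Nat.succ_min_succ, Nat.add_sub_add_right,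
              Nat.add_sub_add_right]

theorem mem_span_pow_mul_pow_of_mem_adjoin (h : y * x = algebraMap k A α) {a : A}
    (ha : a ∈ Algebra.adjoin k {x, y}) :
    a ∈ Submodule.span k (Set.range fun p : ℕ × ℕ => x ^ p.1 * y ^ p.2) := by
  set S := Submodule.span k (Set.range fun p : ℕ × ℕ => x ^ p.1 * y ^ p.2)
  have monomial_mem (i j : ℕ) : x ^ i * y ^ j ∈ S := Submodule.subset_span ⟨(i, j), rfl⟩
  have one_mem : (1 : A) ∈ S := by simpa using monomial_mem 0 0
  have mul_mem (a b : A) (ha : a ∈ S) (hb : b ∈ S) : a * b ∈ S := by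
    have hab := Submodule.mul_mem_mul ha hb
    rw [Submodule.span_mul_span] at hab
    refine Submodule.span_le.2 ?_ hab
    rintro _ ⟨_, ⟨⟨i, j⟩, rfl⟩, _, ⟨⟨m, n⟩, rfl⟩, rfl⟩
    have : x ^ i * y ^ j * (x ^ m * y ^ n) =
        α ^ min j m • (x ^ (i + (m - j)) * y ^ (j - m + n)) := by
      rw [mul_assoc, ← mul_assoc (y ^ j), pow_mul_pow_of_mul_eq_algebraMap h, smul_mul_assoc,
        mul_smul_comm, pow_add, pow_add]
      simp only [mul_assoc]
    change x ^ i * y ^ j * (x ^ m * y ^ n) ∈ S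
    rw [this]
    exact S.smul_mem _ (monomial_mem _ _)
  refine Algebra.adjoin_le (S := S.toSubalgebra one_mem mul_mem) ?_ ha
  rintro _ (rfl | rfl)
  · simpa using monomial_mem 1 0
  · simpa using monomial_mem 0 1

end Normalization

noncomputable section

namespace Toeplitz

section Representation

variable {k : Type*} [CommSemiring k]

def raise : ((ℕ × ℕ) →₀ k) →ₗ[k] ((ℕ × ℕ) →₀ k) :=
  Finsupp.lmapDomain k k fun p => (p.1 + 1, p.2)

def lowerSingle (α : k) : ℕ × ℕ → ((ℕ × ℕ) →₀ k)
  | (0, j) => Finsupp.single (0, j + 1) 1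
  | (i + 1, j) => Finsupp.single (i, j) α

def lower (α : k) : ((ℕ × ℕ) →₀ k) →ₗ[k] ((ℕ × ℕ) →₀ k) :=
  Finsupp.linearCombination k (lowerSingle α)

theorem raise_single (i j : ℕ) (c : k) :
    raise (Finsupp.single (i, j) c) = Finsupp.single (i + 1, j) c := by
  simp [raise, Finsupp.mapDomain_single]

theorem lower_single_zero (α : k) (j : ℕ) (c : k) :
    lower α (Finsupp.single (0, j) c) = Finsupp.single (0, j + 1) c := by
  simp [lower, lowerSingle, Finsupp.smul_single]

theorem lower_comp_raise (α : k) : lower α ∘ₗ raise = α • LinearMap.id := by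
  refine Finsupp.lhom_ext fun ⟨i, j⟩ c => ?_
  simp [raise_single, lower, lowerSingle, Finsupp.smul_single, mul_comm]

theorem raise_pow_single (n i j : ℕ) (c : k) :
    (raise ^ n) (Finsupp.single (i, j) c) = Finsupp.single (i + n, j) c := by
  induction n with
  | zero => rfl
  | succ n ih => rw [pow_succ', Module.End.mul_apply, ih, raise_single, add_assoc]

theorem lower_pow_single_zero (α : k) (n j : ℕ) (c : k) :
    (lower α ^ n) (Finsupp.single (0, j) c) = Finsupp.single (0, j + n) c := by
  induction n with
  | zero => rfl
  | succ n ih => rw [pow_succ', Module.End.mul_apply, ih, lower_single_zero, add_assoc]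

end Representation

section Quotient

variable {k : Type} [CommRing k] (α : k)

def x : RingQuot (toeplitzRel k α) := RingQuot.mkAlgHom k (toeplitzRel k α) (FreeAlgebra.ι k 0)

def y : RingQuot (toeplitzRel k α) := RingQuot.mkAlgHom k (toeplitzRel k α) (FreeAlgebra.ι k 1)

theorem y_mul_x : y α * x α = algebraMap k _ α := by
  have h := RingQuot.mkAlgHom_rel k (show toeplitzRel k α _ _ from ⟨rfl, rfl⟩)
  rwa [map_mul, AlgHom.commutes] at h

theorem adjoin_x_y : Algebra.adjoin k {x α, y α} = ⊤ := by
  have : {x α, y α} = RingQuot.mkAlgHom k (toeplitzRel k α) '' Set.range (FreeAlgebra.ι k) := by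
    ext a
    simp [Fin.exists_fin_two, x, y, eq_comm]
  rw [this, Algebra.adjoin_image, FreeAlgebra.adjoin_range_ι, Algebra.map_top,
    AlgHom.range_eq_top]
  exact RingQuot.mkAlgHom_surjective k _

def rep : RingQuot (toeplitzRel k α) →ₐ[k] Module.End k ((ℕ × ℕ) →₀ k) :=
  RingQuot.liftAlgHom k ⟨FreeAlgebra.lift k ![raise, lower α], by
    rintro _ _ ⟨rfl, rfl⟩
    rw [map_mul, FreeAlgebra.lift_ι_apply, FreeAlgebra.lift_ι_apply, AlgHom.commutes,
      Algebra.algebraMap_eq_smul_one]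
    exact lower_comp_raise α⟩

theorem rep_x : rep α (x α) = raise := by
  simp [rep, x]

theorem rep_y : rep α (y α) = lower α := by
  simp [rep, y]

theorem linearIndependent_x_pow_mul_y_pow :
    LinearIndependent k fun p : ℕ × ℕ => x α ^ p.1 * y α ^ p.2 := by
  refine LinearIndependent.of_comp
    (LinearMap.applyₗ (Finsupp.single (0, 0) 1) ∘ₗ (rep α).toLinearMap) ?_
  convert (Finsupp.basisSingleOne (R := k) (ι := ℕ × ℕ)).linearIndependent using 1
  funext ⟨i, j⟩
  simp [rep_x, rep_y, lower_pow_single_zero, raise_pow_single]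

theorem span_x_pow_mul_y_pow :
    Submodule.span k (Set.range fun p : ℕ × ℕ => x α ^ p.1 * y α ^ p.2) = ⊤ :=
  eq_top_iff.2 fun _ _ =>
    mem_span_pow_mul_pow_of_mem_adjoin (y_mul_x α) (by rw [adjoin_x_y]; trivial)

end Quotient

end Toeplitz

end

/-- In `T = k⟨x,y⟩/(yx − α)`, the monomials `x^i y^j` (`i, j ≥ 0`) form a
`k`-module basis. -/
theorem toeplitz_basis {k : Type} [CommRing k] (α : k) :
    ∃ B : Module.Basis (ℕ × ℕ) k (RingQuot (toeplitzRel k α)),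
      ∀ p : ℕ × ℕ,
        B p = (RingQuot.mkAlgHom k (toeplitzRel k α) (FreeAlgebra.ι k 0)) ^ p.1 *
              (RingQuot.mkAlgHom k (toeplitzRel k α) (FreeAlgebra.ι k 1)) ^ p.2 :=
  ⟨.mk (Toeplitz.linearIndependent_x_pow_mul_y_pow α) (Toeplitz.span_x_pow_mul_y_pow α).ge,
    Module.Basis.mk_apply _ _⟩
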